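/- Let V₁, V₂ be smooth real-valued functions on ℝ, and set p_j(x,ξ) := ξ² + V_j(x) with (H_{p_j} f)(x,ξ) := 2ξ ∂_x f − V_j'(x) ∂_ξ f. Let ρ = (ρ_x, ρ_ξ) ∈ ℝ² with ρ_ξ ≠ 0 and V₁(ρ_x) = V₂(ρ_x), and suppose there exists k ≥ 1 with V₁^{(k)}(ρ_x) ≠ V₂^{(k)}(ρ_x). Then min{m ≥ 1 : (H_{p₁}^m p₂)(ρ) ≠ 0} = min{m ≥ 1 : (H_{p₂}^m p₁)(ρ) ≠ 0} = min{k ≥ 1 : V₁^{(k)}(ρ_x) ≠ V₂^{(k)}(ρ_x)}; in particular all three minima are finite and equal, so the contact order of the characteristic curves p₁^{−1}(E₀) and p₂^{−1}(E₀) at a crossing point off the zero section coincides with the contact order of the potentials V₁ and V₂ at ρ_x. -/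

import Mathlib

open Set

/-- The Hamiltonian derivation `H_p` associated with `p(x,ξ) = ξ² + V(x)`,
acting on (curried) functions on phase space:
`(H_p f)(x,ξ) = 2ξ ∂ₓf(x,ξ) − V'(x) ∂_ξ f(x,ξ)`. -/
noncomputable def Ham (V : ℝ → ℝ) (f : ℝ → ℝ → ℝ) : ℝ → ℝ → ℝ :=
  fun x ξ => 2 * ξ * deriv (fun x' => f x' ξ) x - deriv V x * deriv (fun ξ' => f x ξ') ξ

/-! ### Auxiliary machinery -/

private lemma smooth_iter {w : ℝ → ℝ} (hw : ContDiff ℝ (⊤ : ℕ∞) w) (b : ℕ) :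
    ContDiff ℝ (⊤ : ℕ∞) (iteratedDeriv b w) := by
  rw [iteratedDeriv_eq_iterate]
  exact ContDiff.iterate_deriv b hw

private lemma diff_of_smooth {f : ℝ → ℝ} (hf : ContDiff ℝ (⊤ : ℕ∞) f) :
    Differentiable ℝ f :=
  hf.differentiable (by simp)

private lemma smooth_deriv {V : ℝ → ℝ} (hV : ContDiff ℝ (⊤ : ℕ∞) V) :
    ContDiff ℝ (⊤ : ℕ∞) (deriv V) :=
  (contDiff_infty_iff_deriv.mp hV).2

/-- Remainder class: finite sums of monomials `ξ^a * g(x) * w^{(b)}(x)` with `b < m`. -/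
inductive Rem (w : ℝ → ℝ) (m : ℕ) : (ℝ → ℝ → ℝ) → Prop
  | mono (a b : ℕ) (g : ℝ → ℝ) (hg : ContDiff ℝ (⊤ : ℕ∞) g) (hb : b < m) :
      Rem w m (fun x ξ => ξ ^ a * (g x * iteratedDeriv b w x))
  | zero : Rem w m (fun _ _ => 0)
  | add (f h : ℝ → ℝ → ℝ) : Rem w m f → Rem w m h → Rem w m (fun x ξ => f x ξ + h x ξ)

private lemma Rem.congr {w : ℝ → ℝ} {m : ℕ} {f h : ℝ → ℝ → ℝ}
    (hf : Rem w m f) (he : ∀ x ξ, f x ξ = h x ξ) : Rem w m h := by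
  have : f = h := funext fun x => funext fun ξ => he x ξ
  exact this ▸ hf

private lemma Rem.diffx {w : ℝ → ℝ} {m : ℕ} {f : ℝ → ℝ → ℝ}
    (hw : ContDiff ℝ (⊤ : ℕ∞) w) (hf : Rem w m f) (ξ : ℝ) :
    Differentiable ℝ (fun x => f x ξ) := by
  induction hf with
  | mono a b g hg hb =>
      exact (differentiable_const _).mul
        ((hg |> diff_of_smooth).mul ((smooth_iter hw b) |> diff_of_smooth))
  | zero => exact differentiable_const 0
  | add f h hf hh ihf ihh => exact ihf.add ihh

private lemma Rem.diffxi {w : ℝ → ℝ} {m : ℕ} {f : ℝ → ℝ → ℝ}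
    (hf : Rem w m f) (x : ℝ) : Differentiable ℝ (fun ξ => f x ξ) := by
  induction hf with
  | mono a b g hg hb => exact (differentiable_pow a).mul_const _
  | zero => exact differentiable_const 0
  | add f h hf hh ihf ihh => exact ihf.add ihh

private lemma Ham_add (V : ℝ → ℝ) (f h : ℝ → ℝ → ℝ) (x ξ : ℝ)
    (h1 : DifferentiableAt ℝ (fun x' => f x' ξ) x)
    (h2 : DifferentiableAt ℝ (fun x' => h x' ξ) x)
    (h3 : DifferentiableAt ℝ (fun ξ' => f x ξ') ξ)
    (h4 : DifferentiableAt ℝ (fun ξ' => h x ξ') ξ) :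
    Ham V (fun x' ξ' => f x' ξ' + h x' ξ') x ξ = Ham V f x ξ + Ham V h x ξ := by
  simp only [Ham]
  rw [deriv_fun_add h1 h2, deriv_fun_add h3 h4]
  ring

private lemma Ham_mono (V w g : ℝ → ℝ) (hg : ContDiff ℝ (⊤ : ℕ∞) g)
    (hw : ContDiff ℝ (⊤ : ℕ∞) w) (a b : ℕ) (x ξ : ℝ) :
    Ham V (fun x' ξ' => ξ' ^ a * (g x' * iteratedDeriv b w x')) x ξ =
      ξ ^ (a + 1) * ((2 * deriv g x) * iteratedDeriv b w x) +
        (ξ ^ (a + 1) * ((2 * g x) * iteratedDeriv (b + 1) w x) +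
          ξ ^ (a - 1) * (((-(a : ℝ)) * (deriv V x * g x)) * iteratedDeriv b w x)) := by
  have hgd : DifferentiableAt ℝ g x := (hg |> diff_of_smooth) x
  have hwd : DifferentiableAt ℝ (iteratedDeriv b w) x :=
    ((smooth_iter hw b) |> diff_of_smooth) x
  have h1 : deriv (fun x' => ξ ^ a * (g x' * iteratedDeriv b w x')) x
      = ξ ^ a * (deriv g x * iteratedDeriv b w x + g x * iteratedDeriv (b + 1) w x) := by
    rw [deriv_const_mul _ (d := fun y => g y * iteratedDeriv b w y) (hgd.mul hwd), deriv_fun_mul hgd hwd, iteratedDeriv_succ]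
  have h2 : deriv (fun ξ' => ξ' ^ a * (g x * iteratedDeriv b w x)) ξ
      = ((a : ℝ) * ξ ^ (a - 1)) * (g x * iteratedDeriv b w x) := by
    rw [deriv_mul_const (differentiableAt_pow a), deriv_pow_field]
  simp only [Ham, h1, h2]
  cases a with
  | zero => simp; ring
  | succ n =>
      simp only [Nat.add_sub_cancel, pow_succ]
      push_cast
      ring

private lemma Rem.ham {V w : ℝ → ℝ} {m : ℕ} {f : ℝ → ℝ → ℝ}
    (hV : ContDiff ℝ (⊤ : ℕ∞) V) (hw : ContDiff ℝ (⊤ : ℕ∞) w)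
    (hf : Rem w m f) : Rem w (m + 1) (Ham V f) := by
  induction hf with
  | mono a b g hg hb =>
      have t1 : Rem w (m + 1)
          (fun x ξ => ξ ^ (a + 1) * ((fun x' => 2 * deriv g x') x * iteratedDeriv b w x)) :=
        Rem.mono (a + 1) b _ (contDiff_const.mul (smooth_deriv hg)) (Nat.lt_succ_of_lt hb)
      have t2 : Rem w (m + 1)
          (fun x ξ => ξ ^ (a + 1) * ((fun x' => 2 * g x') x * iteratedDeriv (b + 1) w x)) :=
        Rem.mono (a + 1) (b + 1) _ (contDiff_const.mul hg) (Nat.succ_lt_succ hb)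
      have t3 : Rem w (m + 1)
          (fun x ξ => ξ ^ (a - 1) *
            ((fun x' => (-(a : ℝ)) * (deriv V x' * g x')) x * iteratedDeriv b w x)) :=
        Rem.mono (a - 1) b _ (contDiff_const.mul ((smooth_deriv hV).mul hg))
          (Nat.lt_succ_of_lt hb)
      exact (t1.add _ _ (t2.add _ _ t3)).congr fun x ξ => (Ham_mono V w g hg hw a b x ξ).symm
  | zero =>
      refine Rem.zero.congr fun x ξ => ?_
      simp [Ham]
  | add f h hf hh ihf ihh =>
      have := fun x ξ => Ham_add V f h x ξ (hf.diffx hw ξ x) (hh.diffx hw ξ x)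
        (hf.diffxi x ξ) (hh.diffxi x ξ)
      exact (ihf.add _ _ ihh).congr fun x ξ => (this x ξ).symm

private lemma Rem.eval {w : ℝ → ℝ} {m : ℕ} {f : ℝ → ℝ → ℝ}
    (hf : Rem w m f) (x ξ : ℝ) (h0 : ∀ j, j < m → iteratedDeriv j w x = 0) :
    f x ξ = 0 := by
  induction hf with
  | mono a b g hg hb => simp only [h0 b hb, mul_zero]
  | zero => rfl
  | add f h hf hh ihf ihh => simp only [ihf, ihh, add_zero]

/-- The structure theorem for iterates of the Hamiltonian derivation applied to
`p₂ = ξ² + U` with Hamiltonian from `V`: the leading term is `(2ξ)^m w^{(m)}` with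
`w = U - V`, and the remainder only involves derivatives of `w` of order `< m`. -/
private lemma iter_repr (V U : ℝ → ℝ) (hV : ContDiff ℝ (⊤ : ℕ∞) V)
    (hU : ContDiff ℝ (⊤ : ℕ∞) U) (m : ℕ) :
    ∃ r, Rem (fun y => U y - V y) (m + 1) r ∧
      (Ham V)^[m + 1] (fun x' ξ' => ξ' ^ 2 + U x') =
        fun x ξ => ξ ^ (m + 1) *
          ((2 : ℝ) ^ (m + 1) * iteratedDeriv (m + 1) (fun y => U y - V y) x) + r x ξ := by
  set w : ℝ → ℝ := fun y => U y - V y with hw_def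
  have hw : ContDiff ℝ (⊤ : ℕ∞) w := hU.sub hV
  induction m with
  | zero =>
      refine ⟨fun _ _ => 0, Rem.zero, ?_⟩
      funext x ξ
      have hUd : DifferentiableAt ℝ U x := (hU |> diff_of_smooth) x
      have hVd : DifferentiableAt ℝ V x := (hV |> diff_of_smooth) x
      have h1 : deriv (fun x' => ξ ^ 2 + U x') x = deriv U x := deriv_const_add _
      have h2 : deriv (fun ξ' => ξ' ^ 2 + U x) ξ = 2 * ξ := by
        rw [deriv_add_const]
        simp [deriv_pow]
      have h3 : iteratedDeriv 1 w x = deriv U x - deriv V x := by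
        rw [iteratedDeriv_one, hw_def, deriv_fun_sub hUd hVd]
      rw [Function.iterate_one]
      show 2 * ξ * deriv (fun x' => ξ ^ 2 + U x') x
          - deriv V x * deriv (fun ξ' => ξ' ^ 2 + U x) ξ = _
      rw [h1, h2, h3]
      ring
  | succ n ih =>
      obtain ⟨r, hr, heq⟩ := ih
      set L : ℝ → ℝ → ℝ :=
        fun x ξ => ξ ^ (n + 1) * ((2 : ℝ) ^ (n + 1) * iteratedDeriv (n + 1) w x) with hL_def
      have hLx : ∀ ξ, Differentiable ℝ (fun x => L x ξ) := fun ξ =>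
        (differentiable_const _).mul ((differentiable_const _).mul
          ((smooth_iter hw (n + 1)) |> diff_of_smooth))
      have hLxi : ∀ x, Differentiable ℝ (fun ξ => L x ξ) := fun x =>
        (differentiable_pow _).mul_const _
      refine ⟨fun x ξ => ξ ^ n *
          ((fun x' => (-((n + 1 : ℕ) : ℝ)) * (deriv V x' * (2 : ℝ) ^ (n + 1))) x *
            iteratedDeriv (n + 1) w x) + Ham V r x ξ, ?_, ?_⟩
      · exact (Rem.mono n (n + 1) _
          (contDiff_const.mul ((smooth_deriv hV).mul contDiff_const)) (Nat.lt_succ_self _)).add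
          _ _ (hr.ham hV hw)
      · funext x ξ
        rw [Function.iterate_succ_apply', heq]
        have hadd : Ham V (fun x' ξ' => L x' ξ' + r x' ξ') x ξ
            = Ham V L x ξ + Ham V r x ξ :=
          Ham_add V L r x ξ (hLx ξ x) (hr.diffx hw ξ x) (hLxi x ξ) (hr.diffxi x ξ)
        have hmono : Ham V (fun x' ξ' => ξ' ^ (n + 1) *
              ((fun _ => (2 : ℝ) ^ (n + 1)) x' * iteratedDeriv (n + 1) w x')) x ξ =
            ξ ^ (n + 1 + 1) * ((2 * deriv (fun _ => (2 : ℝ) ^ (n + 1)) x) *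
              iteratedDeriv (n + 1) w x) +
            (ξ ^ (n + 1 + 1) * ((2 * (2 : ℝ) ^ (n + 1)) * iteratedDeriv (n + 1 + 1) w x) +
              ξ ^ (n + 1 - 1) * (((-((n + 1 : ℕ) : ℝ)) *
                (deriv V x * (2 : ℝ) ^ (n + 1))) * iteratedDeriv (n + 1) w x)) :=
          Ham_mono V w (fun _ => (2 : ℝ) ^ (n + 1)) contDiff_const hw (n + 1) (n + 1) x ξ
        have hmono' : Ham V L x ξ =
            ξ ^ (n + 2) * ((2 : ℝ) ^ (n + 2) * iteratedDeriv (n + 2) w x) +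
            ξ ^ n * ((-((n + 1 : ℕ) : ℝ)) * (deriv V x * (2 : ℝ) ^ (n + 1)) *
              iteratedDeriv (n + 1) w x) := by
          rw [show Ham V L x ξ = Ham V (fun x' ξ' => ξ' ^ (n + 1) *
              ((fun _ => (2 : ℝ) ^ (n + 1)) x' * iteratedDeriv (n + 1) w x')) x ξ from rfl,
            hmono]
          simp only [deriv_const', Nat.add_sub_cancel]
          ring
        calc Ham V (fun x' ξ' => L x' ξ' + r x' ξ') x ξ
            = Ham V L x ξ + Ham V r x ξ := hadd
          _ = _ := by rw [hmono']; ring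

/-- The value of the `m`-th iterate at the crossing point, provided all derivatives of
`w = U - V` of order `< k` vanish there and `1 ≤ m ≤ k`. -/
private lemma val_eq (V U : ℝ → ℝ) (hV : ContDiff ℝ (⊤ : ℕ∞) V)
    (hU : ContDiff ℝ (⊤ : ℕ∞) U) (ρx ρξ : ℝ) (k m : ℕ) (hm1 : 1 ≤ m) (hmk : m ≤ k)
    (hzero : ∀ j, j < k → iteratedDeriv j (fun y => U y - V y) ρx = 0) :
    (Ham V)^[m] (fun x' ξ' => ξ' ^ 2 + U x') ρx ρξ =
      ρξ ^ m * ((2 : ℝ) ^ m * iteratedDeriv m (fun y => U y - V y) ρx) := by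
  obtain ⟨m', rfl⟩ : ∃ m', m = m' + 1 := ⟨m - 1, (Nat.succ_pred_eq_of_pos hm1).symm⟩
  obtain ⟨r, hr, heq⟩ := iter_repr V U hV hU m'
  have h0 : ∀ j, j < m' + 1 → iteratedDeriv j (fun y => U y - V y) ρx = 0 :=
    fun j hj => hzero j (lt_of_lt_of_le hj hmk)
  rw [heq]
  simp only [hr.eval ρx ρξ h0, add_zero]

private lemma iter_sub (f g : ℝ → ℝ) (hf : ContDiff ℝ (⊤ : ℕ∞) f)
    (hg : ContDiff ℝ (⊤ : ℕ∞) g) (n : ℕ) :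
    iteratedDeriv n (fun y => f y - g y) =
      fun x => iteratedDeriv n f x - iteratedDeriv n g x := by
  induction n with
  | zero => simp [iteratedDeriv_zero]
  | succ n ih =>
      funext x
      rw [iteratedDeriv_succ, ih, iteratedDeriv_succ, iteratedDeriv_succ]
      exact deriv_sub (((smooth_iter hf n) |> diff_of_smooth) x)
        (((smooth_iter hg n) |> diff_of_smooth) x)

/-- At a crossing point `ρ = (ρₓ, ρ_ξ)` with `ρ_ξ ≠ 0` and `V₁(ρₓ) = V₂(ρₓ)`, if the
potentials differ at `ρₓ` at some derivative order `k ≥ 1`, then the contact order of the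
characteristic curves, `min{m ≥ 1 : H_{p₁}^m p₂(ρ) ≠ 0} = min{m ≥ 1 : H_{p₂}^m p₁(ρ) ≠ 0}`,
is finite and coincides with the contact order of the potentials,
`min{k ≥ 1 : V₁^{(k)}(ρₓ) ≠ V₂^{(k)}(ρₓ)}`. -/
theorem stmt_4 (V₁ V₂ : ℝ → ℝ)
    (hV₁ : ContDiff ℝ (⊤ : ℕ∞) V₁) (hV₂ : ContDiff ℝ (⊤ : ℕ∞) V₂)
    (ρx ρξ : ℝ) (hρξ : ρξ ≠ 0) (hcross : V₁ ρx = V₂ ρx)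
    (hk : ∃ k : ℕ, 1 ≤ k ∧ iteratedDeriv k V₁ ρx ≠ iteratedDeriv k V₂ ρx) :
    ({m : ℕ | 1 ≤ m ∧ (Ham V₁)^[m] (fun x' ξ' => ξ' ^ 2 + V₂ x') ρx ρξ ≠ 0}).Nonempty ∧
    ({m : ℕ | 1 ≤ m ∧ (Ham V₂)^[m] (fun x' ξ' => ξ' ^ 2 + V₁ x') ρx ρξ ≠ 0}).Nonempty ∧
    sInf {m : ℕ | 1 ≤ m ∧ (Ham V₁)^[m] (fun x' ξ' => ξ' ^ 2 + V₂ x') ρx ρξ ≠ 0} =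
      sInf {k : ℕ | 1 ≤ k ∧ iteratedDeriv k V₁ ρx ≠ iteratedDeriv k V₂ ρx} ∧
    sInf {m : ℕ | 1 ≤ m ∧ (Ham V₂)^[m] (fun x' ξ' => ξ' ^ 2 + V₁ x') ρx ρξ ≠ 0} =
      sInf {k : ℕ | 1 ≤ k ∧ iteratedDeriv k V₁ ρx ≠ iteratedDeriv k V₂ ρx} := by
  set K : Set ℕ := {k : ℕ | 1 ≤ k ∧ iteratedDeriv k V₁ ρx ≠ iteratedDeriv k V₂ ρx} with hK
  have hKne : K.Nonempty := hk
  set k₀ : ℕ := sInf K with hk₀def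
  have hk₀ : k₀ ∈ K := Nat.sInf_mem hKne
  -- derivatives of order < k₀ agree
  have hagree : ∀ j, j < k₀ → iteratedDeriv j V₁ ρx = iteratedDeriv j V₂ ρx := by
    intro j hj
    rcases Nat.eq_zero_or_pos j with rfl | hj1
    · simpa [iteratedDeriv_zero] using hcross
    · by_contra hne
      exact Nat.notMem_of_lt_sInf hj ⟨hj1, hne⟩
  have hzero₁ : ∀ j, j < k₀ → iteratedDeriv j (fun y => V₂ y - V₁ y) ρx = 0 := by
    intro j hj
    rw [iter_sub V₂ V₁ hV₂ hV₁, sub_eq_zero]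
    exact (hagree j hj).symm
  have hzero₂ : ∀ j, j < k₀ → iteratedDeriv j (fun y => V₁ y - V₂ y) ρx = 0 := by
    intro j hj
    rw [iter_sub V₁ V₂ hV₁ hV₂, sub_eq_zero]
    exact hagree j hj
  have hne₁ : iteratedDeriv k₀ (fun y => V₂ y - V₁ y) ρx ≠ 0 := by
    rw [iter_sub V₂ V₁ hV₂ hV₁, sub_ne_zero]
    exact hk₀.2.symm
  have hne₂ : iteratedDeriv k₀ (fun y => V₁ y - V₂ y) ρx ≠ 0 := by
    rw [iter_sub V₁ V₂ hV₁ hV₂, sub_ne_zero]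
    exact hk₀.2
  -- values of the iterates
  have hval₁ : ∀ m, 1 ≤ m → m ≤ k₀ →
      (Ham V₁)^[m] (fun x' ξ' => ξ' ^ 2 + V₂ x') ρx ρξ =
        ρξ ^ m * ((2 : ℝ) ^ m * iteratedDeriv m (fun y => V₂ y - V₁ y) ρx) :=
    fun m hm1 hmk => val_eq V₁ V₂ hV₁ hV₂ ρx ρξ k₀ m hm1 hmk hzero₁
  have hval₂ : ∀ m, 1 ≤ m → m ≤ k₀ →
      (Ham V₂)^[m] (fun x' ξ' => ξ' ^ 2 + V₁ x') ρx ρξ =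
        ρξ ^ m * ((2 : ℝ) ^ m * iteratedDeriv m (fun y => V₁ y - V₂ y) ρx) :=
    fun m hm1 hmk => val_eq V₂ V₁ hV₂ hV₁ ρx ρξ k₀ m hm1 hmk hzero₂
  set A : Set ℕ := {m : ℕ | 1 ≤ m ∧ (Ham V₁)^[m] (fun x' ξ' => ξ' ^ 2 + V₂ x') ρx ρξ ≠ 0}
    with hA
  set B : Set ℕ := {m : ℕ | 1 ≤ m ∧ (Ham V₂)^[m] (fun x' ξ' => ξ' ^ 2 + V₁ x') ρx ρξ ≠ 0}
    with hB
  have hk₀A : k₀ ∈ A := by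
    refine ⟨hk₀.1, ?_⟩
    rw [hval₁ k₀ hk₀.1 le_rfl]
    exact mul_ne_zero (pow_ne_zero _ hρξ)
      (mul_ne_zero (pow_ne_zero _ two_ne_zero) hne₁)
  have hk₀B : k₀ ∈ B := by
    refine ⟨hk₀.1, ?_⟩
    rw [hval₂ k₀ hk₀.1 le_rfl]
    exact mul_ne_zero (pow_ne_zero _ hρξ)
      (mul_ne_zero (pow_ne_zero _ two_ne_zero) hne₂)
  have hAlow : ∀ m ∈ A, k₀ ≤ m := by
    intro m hm
    by_contra hlt
    push_neg at hlt
    exact hm.2 (by rw [hval₁ m hm.1 hlt.le, hzero₁ m hlt, mul_zero, mul_zero])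
  have hBlow : ∀ m ∈ B, k₀ ≤ m := by
    intro m hm
    by_contra hlt
    push_neg at hlt
    exact hm.2 (by rw [hval₂ m hm.1 hlt.le, hzero₂ m hlt, mul_zero, mul_zero])
  refine ⟨⟨k₀, hk₀A⟩, ⟨k₀, hk₀B⟩, ?_, ?_⟩
  · exact le_antisymm (Nat.sInf_le hk₀A) (hAlow _ (Nat.sInf_mem ⟨k₀, hk₀A⟩))
  · exact le_antisymm (Nat.sInf_le hk₀B) (hBlow _ (Nat.sInf_mem ⟨k₀, hk₀B⟩))
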